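/- Let r, s be real with 0 < s, 2s < r, and r + 5s/3 < 1, and suppose 2(3 − s)/9 ≤ r ≤ 2/3 + s. Then the point p = ((3 + r − s)/11, 2(3 + r − s)/11) lies in the closed region D3 = {(x₁, x₂) : s ≤ x₁ ≤ r − s, r − s ≤ x₂ ≤ r} and is a fixed point of the affine map F₃, i.e. F₃(p) = p. -/

import Mathlib

/-- The affine branch of the return-time map on region 3. -/
noncomputable def F3 (r s : ℝ) (p : ℝ × ℝ) : ℝ × ℝ :=
  (1 - 4*p.2/3 + (r - s)/3, 1 - 4*p.2/3 + p.1 + (r - s)/3)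

/-- The closed region D3. -/
def D3 (r s : ℝ) : Set (ℝ × ℝ) :=
  {p | s ≤ p.1 ∧ p.1 ≤ r - s ∧ r - s ≤ p.2 ∧ p.2 ≤ r}

/-!
Subtracting the coordinates of `F₃ x = x` gives `x₂ = 2 x₁`, and then `x₁ = (3 + r - s)/11`, so
`p` is the unique fixed point of `F₃`. Of the inequalities defining `D3`, the two on `x₂` are the
bounds `2(3 - s)/9 ≤ r ≤ 2/3 + s` rewritten; the two on `x₁` hold because `r + 5s/3 < 1` together
with the lower bound on `r` forces `r > 8/13`, hence `s` small.
-/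

theorem F3_eq_self_iff (r s : ℝ) (p : ℝ × ℝ) :
    F3 r s p = p ↔ p = ((3 + r - s)/11, 2*(3 + r - s)/11) := by
  constructor
  · intro h
    obtain ⟨h₁, h₂⟩ := Prod.ext_iff.mp h
    simp only [F3] at h₁ h₂
    have hx₂ : p.2 = 2 * p.1 := by linarith
    ext <;> linarith
  · rintro rfl
    ext <;> simp only [F3] <;> ring

theorem mk_mem_D3 {r s : ℝ} (h1 : r + 5*s/3 < 1) (hlo : 2*(3 - s)/9 ≤ r) (hhi : r ≤ 2/3 + s) :
    ((3 + r - s)/11, 2*(3 + r - s)/11) ∈ D3 r s := by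
  have hr : 8/13 < r := by linarith
  refine ⟨?_, ?_, ?_, ?_⟩ <;> dsimp only <;> linarith

theorem fixed_point_in_region3_general (r s : ℝ)
    (h1 : r + 5*s/3 < 1) (hlo : 2*(3 - s)/9 ≤ r) (hhi : r ≤ 2/3 + s) :
    ((3 + r - s)/11, 2*(3 + r - s)/11) ∈ D3 r s ∧
    F3 r s ((3 + r - s)/11, 2*(3 + r - s)/11) = ((3 + r - s)/11, 2*(3 + r - s)/11) :=
  ⟨mk_mem_D3 h1 hlo hhi, (F3_eq_self_iff r s _).mpr rfl⟩

theorem fixed_point_in_region3 (r s : ℝ) (hs : 0 < s) (hrs : 2*s < r)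
    (h1 : r + 5*s/3 < 1) (hlo : 2*(3 - s)/9 ≤ r) (hhi : r ≤ 2/3 + s) :
    ((3 + r - s)/11, 2*(3 + r - s)/11) ∈ D3 r s ∧
    F3 r s ((3 + r - s)/11, 2*(3 + r - s)/11) = ((3 + r - s)/11, 2*(3 + r - s)/11) :=
  fixed_point_in_region3_general r s h1 hlo hhi
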